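/- For every r ≥ 1 and n ∈ ℕ, the order-r q-Bernoulli polynomial expands in the order-r q-Frobenius–Euler basis as B^{(r)}_{n,q}(x) = (1/(1 − λ)^r) · ∑_{k=0}^{n} A_k · H^{(r)}_{k,q}(x|λ), where A_k = ∑_{m=0}^{n−k} ∑_{l=0}^{r} ∑_{(i_1,…,i_l) ∈ ℕ^l, i_1+⋯+i_l = m} binom(r,l) · (−λ)^{r−l} · C(m; i_1,…,i_l)_q · C(m+k,m)_q · C(n,m+k)_q · B^{(r)}_{n−m−k,q}; here binom(r,l) is the ordinary binomial coefficient and C(m; i_1,…,i_l)_q = [m]_q!/([i_1]_q! ⋯ [i_l]_q!) is the q-multinomial coefficient (with the sum over the empty tuple for l = 0 equal to δ_{m,0}). -/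

import Mathlib

/-!
Write `F`, `H` for the `q`-exponential generating functions of `B^{(r)}_{n,q}(x)` and
`H^{(r)}_{n,q}(x|λ)`, `b` for that of the `q`-Bernoulli numbers, and `E = (e_q(t) - λ)^r`.
Setting `x = 0` gives `b (e_q(t) - 1)^r = t^r`, and since `(e_q(t) - 1)^r` is not a zero divisor,
`(1 - λ)^r F = H E b`. Comparing coefficients of `t^n`, where those of `E` come from the binomial
and multinomial expansions, gives the formula: the `q`-binomial coefficients arise from
`[n]_q! / ([m]_q! [k]_q! [n-m-k]_q!) = C(m+k,m)_q C(n,m+k)_q`.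
-/

open Finset Polynomial

/-- The `q`-integer `[n]_q = (1 - q^n)/(1 - q)` viewed in `ℂ`. -/
noncomputable def qInt (q : ℝ) (n : ℕ) : ℂ := (1 - (q : ℂ) ^ n) / (1 - (q : ℂ))

/-- The `q`-factorial `[n]_q! = ∏_{j=1}^n [j]_q`. -/
noncomputable def qFact (q : ℝ) (n : ℕ) : ℂ := ∏ j ∈ Finset.range n, qInt q (j + 1)

/-- The `q`-binomial coefficient `[n]_q!/([k]_q! [n-k]_q!)`. -/
noncomputable def qBinom (q : ℝ) (n k : ℕ) : ℂ := qFact q n / (qFact q k * qFact q (n - k))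

/-- The formal `q`-exponential `e_q(t) = ∑ t^n/[n]_q!` in `ℂ[x][[t]]`. -/
noncomputable def qExp (q : ℝ) : PowerSeries (Polynomial ℂ) :=
  PowerSeries.mk fun n => Polynomial.C (1 / qFact q n)

/-- The formal series `e_q(xt) = ∑ x^n t^n/[n]_q!` in `ℂ[x][[t]]`. -/
noncomputable def qExpX (q : ℝ) : PowerSeries (Polynomial ℂ) :=
  PowerSeries.mk fun n => Polynomial.C (1 / qFact q n) * Polynomial.X ^ n

/-- `H : ℕ → ℂ[x]` is the family of order-`r` `q`-Frobenius-Euler polynomials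
`H^{(r)}_{n,q}(x|λ)`:
`(∑ H_n t^n/[n]_q!) ⬝ (e_q(t) - λ)^r = (1 - λ)^r e_q(xt)` in `ℂ[x][[t]]`. -/
def IsqFrobeniusEulerOrder (q : ℝ) (lam : ℂ) (r : ℕ) (H : ℕ → Polynomial ℂ) : Prop :=
  (PowerSeries.mk fun n => Polynomial.C (1 / qFact q n) * H n) *
      (qExp q - PowerSeries.C (Polynomial.C lam)) ^ r =
    PowerSeries.C (Polynomial.C ((1 - lam) ^ r)) * qExpX q

/-- `B : ℕ → ℂ[x]` is the family of order-`r` `q`-Bernoulli polynomials `B^{(r)}_{n,q}(x)`: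
`(∑ B_n t^n/[n]_q!) ⬝ (e_q(t) - 1)^r = t^r e_q(xt)` in `ℂ[x][[t]]`. -/
def IsqBernoulliOrder (q : ℝ) (r : ℕ) (B : ℕ → Polynomial ℂ) : Prop :=
  (PowerSeries.mk fun n => Polynomial.C (1 / qFact q n) * B n) * (qExp q - 1) ^ r =
    PowerSeries.X ^ r * qExpX q

namespace PowerSeries

variable {R : Type*} [CommSemiring R]

theorem coeff_pow_eq_sum_antidiagonalTuple (φ : R⟦X⟧) (l m : ℕ) :
    coeff m (φ ^ l) = ∑ i ∈ Finset.Nat.antidiagonalTuple l m, ∏ j, coeff (i j) φ := by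
  rw [← Fin.prod_const, coeff_prod, ← piAntidiag_univ_fin_eq_antidiagonalTuple, finsuppAntidiag,
    sum_map, ← sum_attach (piAntidiag _ _)]
  rfl

theorem coeff_add_C_pow (φ : R⟦X⟧) (c : R) (r m : ℕ) :
    coeff m ((φ + C c) ^ r) =
      ∑ l ∈ range (r + 1), (r.choose l : R) * c ^ (r - l) * coeff m (φ ^ l) := by
  rw [add_pow, map_sum]
  refine sum_congr rfl fun l _ => ?_
  rw [← map_pow, ← map_natCast (C (R := R)), mul_assoc, ← map_mul, mul_comm, coeff_C_mul,
    mul_comm (c ^ _)]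

theorem coeff_mul_mul_eq_sum_range (f g h : R⟦X⟧) (n : ℕ) :
    coeff n (f * (g * h)) = ∑ k ∈ range (n + 1), coeff k f *
      ∑ m ∈ range (n - k + 1), coeff m g * coeff (n - k - m) h := by
  simp only [coeff_mul, Finset.Nat.sum_antidiagonal_eq_sum_range_succ_mk]

end PowerSeries

section qCalculus

variable {q : ℝ}

theorem qInt_succ_ne_zero (hq : |q| ≠ 1) (n : ℕ) : qInt q (n + 1) ≠ 0 := by
  have hpow : (q : ℂ) ^ (n + 1) ≠ 1 := by
    refine mod_cast fun h : q ^ (n + 1) = 1 => hq ?_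
    rw [← pow_eq_one_iff_of_nonneg (abs_nonneg q) n.succ_ne_zero, ← abs_pow, h, abs_one]
  have hq1 : (q : ℂ) ≠ 1 := by exact_mod_cast fun h : q = 1 => hq (by rw [h, abs_one])
  exact div_ne_zero (sub_ne_zero.2 hpow.symm) (sub_ne_zero.2 hq1.symm)

theorem qFact_ne_zero (hq : |q| ≠ 1) (n : ℕ) : qFact q n ≠ 0 :=
  prod_ne_zero_iff.2 fun j _ => qInt_succ_ne_zero hq j

theorem qFact_one (hq : q ≠ 1) : qFact q 1 = 1 := by
  have : (1 : ℂ) - q ≠ 0 := sub_ne_zero.2 (by exact_mod_cast hq.symm)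
  simp [qFact, qInt, this]

theorem qBinom_mul_qBinom (n m k : ℕ) (h : qFact q (m + k) ≠ 0) :
    qBinom q (m + k) m * qBinom q n (m + k) =
      qFact q n / (qFact q m * qFact q k * qFact q (n - m - k)) := by
  rw [qBinom, qBinom, Nat.add_sub_cancel_left, Nat.sub_sub]
  field_simp

theorem qFact_mul_sum_eq_sum_qBinom (hq : |q| ≠ 1) (f g : ℕ → ℂ) (n k : ℕ) :
    qFact q n * (1 / qFact q k * ∑ m ∈ range (n - k + 1),
        f m / qFact q m * (1 / qFact q (n - k - m) * g (n - k - m))) =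
      ∑ m ∈ range (n - k + 1),
        f m * qBinom q (m + k) m * qBinom q n (m + k) * g (n - m - k) := by
  rw [mul_sum, mul_sum]
  refine sum_congr rfl fun m _ => ?_
  rw [mul_assoc (f m), qBinom_mul_qBinom _ _ _ (qFact_ne_zero hq _), Nat.sub_right_comm n m]
  field_simp

theorem coeff_qExp (n : ℕ) : PowerSeries.coeff n (qExp q) = C (1 / qFact q n) := by
  simp [qExp]

theorem qExp_sub_one_ne_zero (hq : q ≠ 1) : qExp q - 1 ≠ 0 := fun h => by
  simpa [coeff_qExp, qFact_one hq, PowerSeries.coeff_one] using congrArg (PowerSeries.coeff 1) h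

noncomputable def qExpSubPowWeight (q : ℝ) (lam : ℂ) (r m : ℕ) : ℂ :=
  ∑ l ∈ range (r + 1), ∑ i ∈ Finset.Nat.antidiagonalTuple l m,
    (r.choose l : ℂ) * (-lam) ^ (r - l) * (qFact q m / ∏ j, qFact q (i j))

theorem coeff_qExp_sub_C_pow (lam : ℂ) (r : ℕ) {m : ℕ} (hm : qFact q m ≠ 0) :
    PowerSeries.coeff m ((qExp q - PowerSeries.C (C lam)) ^ r) =
      C (qExpSubPowWeight q lam r m / qFact q m) := by
  rw [sub_eq_add_neg, ← map_neg, ← map_neg, PowerSeries.coeff_add_C_pow]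
  simp only [PowerSeries.coeff_pow_eq_sum_antidiagonalTuple, coeff_qExp, ← map_prod, ← map_sum,
    ← map_pow, ← map_natCast (C : ℂ →+* ℂ[X]), ← map_mul]
  congr 1
  simp only [qExpSubPowWeight, sum_div, mul_sum, mul_div_assoc]
  refine sum_congr rfl fun l _ => sum_congr rfl fun i _ => ?_
  rw [prod_div_distrib, prod_const_one]
  field_simp

end qCalculus

noncomputable def qEGF (q : ℝ) (a : ℕ → ℂ[X]) : PowerSeries ℂ[X] :=
  PowerSeries.mk fun n => C (1 / qFact q n) * a n

@[simp]
theorem coeff_qEGF (q : ℝ) (a : ℕ → ℂ[X]) (n : ℕ) :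
    PowerSeries.coeff n (qEGF q a) = C (1 / qFact q n) * a n :=
  PowerSeries.coeff_mk _ _

section Expansion

variable {q : ℝ} {lam : ℂ} {r : ℕ} {B H : ℕ → ℂ[X]}

theorem IsqBernoulliOrder.qEGF_eval_zero (hB : IsqBernoulliOrder q r B) :
    qEGF q (fun n => C ((B n).eval 0)) * (qExp q - 1) ^ r = PowerSeries.X ^ r := by
  set ev : ℂ[X] →+* ℂ[X] := C.comp (evalRingHom 0)
  have hexp : PowerSeries.map ev (qExp q) = qExp q := by
    ext n; simp [ev, coeff_qExp]
  have hexpX : PowerSeries.map ev (qExpX q) = 1 := by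
    ext (_ | n) <;> simp [ev, qExpX, qFact, PowerSeries.coeff_one]
  have hegf : PowerSeries.map ev (qEGF q B) = qEGF q fun n => C ((B n).eval 0) := by
    ext n; simp [ev]
  simpa [hexp, hexpX, hegf] using congrArg (PowerSeries.map ev)
    (show qEGF q B * (qExp q - 1) ^ r = PowerSeries.X ^ r * qExpX q from hB)

theorem IsqBernoulliOrder.C_mul_qEGF_eq (hq : q ≠ 1) (hB : IsqBernoulliOrder q r B)
    (hH : IsqFrobeniusEulerOrder q lam r H) :
    PowerSeries.C (C ((1 - lam) ^ r)) * qEGF q B =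
      qEGF q H * ((qExp q - PowerSeries.C (C lam)) ^ r * qEGF q fun n => C ((B n).eval 0)) := by
  have hB' : qEGF q B * (qExp q - 1) ^ r = PowerSeries.X ^ r * qExpX q := hB
  have hH' : qEGF q H * (qExp q - PowerSeries.C (C lam)) ^ r =
      PowerSeries.C (C ((1 - lam) ^ r)) * qExpX q := hH
  refine mul_right_cancel₀ (pow_ne_zero r (qExp_sub_one_ne_zero hq)) ?_
  calc PowerSeries.C (C ((1 - lam) ^ r)) * qEGF q B * (qExp q - 1) ^ r
      = PowerSeries.X ^ r * (qEGF q H * (qExp q - PowerSeries.C (C lam)) ^ r) := by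
        rw [mul_assoc, hB', hH']; ring
    _ = _ := by rw [← hB.qEGF_eval_zero]; ring

theorem IsqBernoulliOrder.C_mul_eq_sum (hq : |q| ≠ 1) (hB : IsqBernoulliOrder q r B)
    (hH : IsqFrobeniusEulerOrder q lam r H) (n : ℕ) :
    C ((1 - lam) ^ r / qFact q n) * B n = ∑ k ∈ range (n + 1),
      C (1 / qFact q k * ∑ m ∈ range (n - k + 1), qExpSubPowWeight q lam r m / qFact q m *
        (1 / qFact q (n - k - m) * (B (n - k - m)).eval 0)) * H k := by
  have hq1 : q ≠ 1 := fun h => hq (by rw [h, abs_one])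
  have h := congrArg (PowerSeries.coeff n) (hB.C_mul_qEGF_eq hq1 hH)
  rw [PowerSeries.coeff_C_mul, coeff_qEGF, PowerSeries.coeff_mul_mul_eq_sum_range] at h
  simp only [coeff_qEGF, coeff_qExp_sub_C_pow _ _ (qFact_ne_zero hq _)] at h
  rw [div_eq_mul_one_div, map_mul, mul_assoc, h]
  simp only [map_mul, map_sum]
  exact sum_congr rfl fun k _ => by ring

end Expansion

theorem qBernoulliOrder_expansion_in_qFrobeniusEulerOrder_basis_general
    (q : ℝ) (hq0 : 0 < q) (hq1 : q < 1) (lam : ℂ) (hlam : lam ≠ 1)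
    (r : ℕ)
    (B : ℕ → Polynomial ℂ) (hB : IsqBernoulliOrder q r B)
    (Hr : ℕ → Polynomial ℂ) (hHr : IsqFrobeniusEulerOrder q lam r Hr) (n : ℕ) :
    B n = Polynomial.C (1 / (1 - lam) ^ r) *
      ∑ k ∈ Finset.range (n + 1),
        Polynomial.C (∑ m ∈ Finset.range (n - k + 1), ∑ l ∈ Finset.range (r + 1),
          ∑ i ∈ Finset.Nat.antidiagonalTuple l m,
            (r.choose l : ℂ) * (-lam) ^ (r - l) *
              (qFact q m / ∏ j, qFact q (i j)) *
              qBinom q (m + k) m * qBinom q n (m + k) *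
              (B (n - m - k)).eval 0) * Hr k := by
  have hq : |q| ≠ 1 := by rw [abs_of_pos hq0]; exact hq1.ne
  have hlam' : (1 - lam) ^ r ≠ 0 := pow_ne_zero r (sub_ne_zero.2 hlam.symm)
  have hn := qFact_ne_zero hq n
  calc B n = C (1 / (1 - lam) ^ r) * (C (qFact q n) * (C ((1 - lam) ^ r / qFact q n) * B n)) := by
        rw [← mul_assoc, ← mul_assoc, ← map_mul, ← map_mul,
          show 1 / (1 - lam) ^ r * qFact q n * ((1 - lam) ^ r / qFact q n) = 1 by field_simp,
          map_one, one_mul]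
    _ = _ := by
        rw [hB.C_mul_eq_sum hq hHr n, mul_sum]
        refine congrArg _ (sum_congr rfl fun k _ => ?_)
        rw [← mul_assoc, ← map_mul]
        congr 2
        simpa only [qExpSubPowWeight, sum_mul] using
          qFact_mul_sum_eq_sum_qBinom hq (qExpSubPowWeight q lam r) (fun j => (B j).eval 0) n k

/-- For `r ≥ 1`,
`B^{(r)}_{n,q}(x) = (1/(1-λ)^r) ∑_{k=0}^n A_k H^{(r)}_{k,q}(x|λ)` with
`A_k = ∑_{m=0}^{n-k} ∑_{l=0}^r ∑_{i₁+⋯+i_l=m} binom(r,l) (-λ)^{r-l}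
  C(m;i₁,…,i_l)_q C(m+k,m)_q C(n,m+k)_q B^{(r)}_{n-m-k,q}`. -/
theorem qBernoulliOrder_expansion_in_qFrobeniusEulerOrder_basis
    (q : ℝ) (hq0 : 0 < q) (hq1 : q < 1) (lam : ℂ) (hlam : lam ≠ 1)
    (r : ℕ) (hr : 1 ≤ r)
    (B : ℕ → Polynomial ℂ) (hB : IsqBernoulliOrder q r B)
    (Hr : ℕ → Polynomial ℂ) (hHr : IsqFrobeniusEulerOrder q lam r Hr) (n : ℕ) :
    B n = Polynomial.C (1 / (1 - lam) ^ r) *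
      ∑ k ∈ Finset.range (n + 1),
        Polynomial.C (∑ m ∈ Finset.range (n - k + 1), ∑ l ∈ Finset.range (r + 1),
          ∑ i ∈ Finset.Nat.antidiagonalTuple l m,
            (r.choose l : ℂ) * (-lam) ^ (r - l) *
              (qFact q m / ∏ j, qFact q (i j)) *
              qBinom q (m + k) m * qBinom q n (m + k) *
              (B (n - m - k)).eval 0) * Hr k :=
  qBernoulliOrder_expansion_in_qFrobeniusEulerOrder_basis_general q hq0 hq1 lam hlam r B hB Hr hHr n
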